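/- arXiv:2504.19269 — 5 statements merged into one kernel-verified Lean document; each statement's English description precedes it below -/
import Mathlib

section
/- Let n ≥ 1 be a natural number and let x be an indeterminate over ℚ (or work in the polynomial ring ℤ[x]). Define the 5×5 matrix M over ℤ[x] with rows indexed 1..5 and columns 1..5 by: rows 1,2,3 are (0, x^{n+1}, 0, x^n, 0), and rows 4,5 are (x^{n+1}, (n-1)x^{n+2}, x^{n+2}, (n-1)x^{n+1}, x^{n+1}). Then trace(M^6) = 2x^{6n+3} + 9(n+1)^2 x^{6n+4} + 6(n+1)^4 x^{6n+5} + (n+1)^6 x^{6n+6}. -/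
open Polynomial Matrix

theorem hexagon_transfer_trace (n : ℕ) (hn : 1 ≤ n)
    (M : Matrix (Fin 5) (Fin 5) (Polynomial ℤ))
    (hM : M = !![0, X ^ (n + 1), 0, X ^ n, 0;
                 0, X ^ (n + 1), 0, X ^ n, 0;
                 0, X ^ (n + 1), 0, X ^ n, 0;
                 X ^ (n + 1), ((n - 1 : ℕ) : Polynomial ℤ) * X ^ (n + 2), X ^ (n + 2),
                   ((n - 1 : ℕ) : Polynomial ℤ) * X ^ (n + 1), X ^ (n + 1);
                 X ^ (n + 1), ((n - 1 : ℕ) : Polynomial ℤ) * X ^ (n + 2), X ^ (n + 2),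
                   ((n - 1 : ℕ) : Polynomial ℤ) * X ^ (n + 1), X ^ (n + 1)]) :
    Matrix.trace (M ^ 6) =
      2 * X ^ (6 * n + 3) + ((9 * (n + 1) ^ 2 : ℕ) : Polynomial ℤ) * X ^ (6 * n + 4)
        + ((6 * (n + 1) ^ 4 : ℕ) : Polynomial ℤ) * X ^ (6 * n + 5)
        + (((n + 1) ^ 6 : ℕ) : Polynomial ℤ) * X ^ (6 * n + 6) := by
  obtain ⟨m, rfl⟩ : ∃ m, n = m + 1 := ⟨n - 1, (Nat.succ_pred_eq_of_pos hn).symm⟩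
  subst hM
  simp only [Nat.add_sub_cancel]
  have h6 : (6 : ℕ) = 1 + 1 + 1 + 1 + 1 + 1 := rfl
  rw [h6, pow_add, pow_add, pow_add, pow_add, pow_add, pow_one]
  simp only [Matrix.trace, Matrix.diag, Fin.sum_univ_five, Matrix.mul_apply,
    Matrix.cons_val', Matrix.cons_val_zero, Matrix.cons_val_one, Matrix.head_cons,
    Matrix.empty_val', Matrix.cons_val_fin_one, Matrix.head_fin_const,
    Matrix.cons_val_two, Matrix.tail_cons, Matrix.cons_val_three, Matrix.cons_val_four,
    Matrix.of_apply, zero_mul, mul_zero, zero_add, add_zero]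
  push_cast
  ring
end

section
/- Let n ≥ 1. Define the 8×5 matrix R over ℤ[x] whose rows 1,2,3 are ((n-1)x^{n+1}, x^{n+1}, x^{n+1}, (n-1)x^{n+2}, x^{n+2}) and whose rows 4..8 are (x^n, 0, 0, x^{n+1}, 0); and the 5×8 matrix T whose rows 1,2 are ((n-1)x^{n+2}, x^{n+1}, x^{n+2}, (n-1)x^{n+2}, x^{n+2}, x^{n+2}, (n-1)x^{n+3}, x^{n+3}) and rows 3,4,5 are (x^{n+1}, 0, 0, x^{n+1}, 0, 0, x^{n+2}, 0). Then trace((R·T)^2) = 2x^{4n+3} + (2n+3)^2 x^{4n+4} + 2(n+1)^2(2n+3) x^{4n+5} + (n+1)^4 x^{4n+6}. -/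
open Polynomial Matrix

theorem diamond_transfer_trace (n : ℕ) (hn : 1 ≤ n)
    (R : Matrix (Fin 8) (Fin 5) (Polynomial ℤ))
    (T : Matrix (Fin 5) (Fin 8) (Polynomial ℤ))
    (hR : R = !![((n - 1 : ℕ) : Polynomial ℤ) * X ^ (n + 1), X ^ (n + 1), X ^ (n + 1),
                   ((n - 1 : ℕ) : Polynomial ℤ) * X ^ (n + 2), X ^ (n + 2);
                 ((n - 1 : ℕ) : Polynomial ℤ) * X ^ (n + 1), X ^ (n + 1), X ^ (n + 1),
                   ((n - 1 : ℕ) : Polynomial ℤ) * X ^ (n + 2), X ^ (n + 2);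
                 ((n - 1 : ℕ) : Polynomial ℤ) * X ^ (n + 1), X ^ (n + 1), X ^ (n + 1),
                   ((n - 1 : ℕ) : Polynomial ℤ) * X ^ (n + 2), X ^ (n + 2);
                 X ^ n, 0, 0, X ^ (n + 1), 0;
                 X ^ n, 0, 0, X ^ (n + 1), 0;
                 X ^ n, 0, 0, X ^ (n + 1), 0;
                 X ^ n, 0, 0, X ^ (n + 1), 0;
                 X ^ n, 0, 0, X ^ (n + 1), 0])
    (hT : T = !![((n - 1 : ℕ) : Polynomial ℤ) * X ^ (n + 2), X ^ (n + 1), X ^ (n + 2),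
                   ((n - 1 : ℕ) : Polynomial ℤ) * X ^ (n + 2), X ^ (n + 2), X ^ (n + 2),
                   ((n - 1 : ℕ) : Polynomial ℤ) * X ^ (n + 3), X ^ (n + 3);
                 ((n - 1 : ℕ) : Polynomial ℤ) * X ^ (n + 2), X ^ (n + 1), X ^ (n + 2),
                   ((n - 1 : ℕ) : Polynomial ℤ) * X ^ (n + 2), X ^ (n + 2), X ^ (n + 2),
                   ((n - 1 : ℕ) : Polynomial ℤ) * X ^ (n + 3), X ^ (n + 3);
                 X ^ (n + 1), 0, 0, X ^ (n + 1), 0, 0, X ^ (n + 2), 0;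
                 X ^ (n + 1), 0, 0, X ^ (n + 1), 0, 0, X ^ (n + 2), 0;
                 X ^ (n + 1), 0, 0, X ^ (n + 1), 0, 0, X ^ (n + 2), 0]) :
    Matrix.trace ((R * T) ^ 2) =
      2 * X ^ (4 * n + 3) + (((2 * n + 3) ^ 2 : ℕ) : Polynomial ℤ) * X ^ (4 * n + 4)
        + ((2 * (n + 1) ^ 2 * (2 * n + 3) : ℕ) : Polynomial ℤ) * X ^ (4 * n + 5)
        + (((n + 1) ^ 4 : ℕ) : Polynomial ℤ) * X ^ (4 * n + 6) := by
  obtain ⟨m, rfl⟩ : ∃ m, n = m + 1 := ⟨n - 1, (Nat.succ_pred_eq_of_pos hn).symm⟩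
  subst hR hT
  simp only [Nat.add_sub_cancel, pow_two, Matrix.trace, Matrix.diag, Matrix.mul_apply,
    Fin.sum_univ_succ, Fin.sum_univ_zero, Matrix.cons_val', Matrix.cons_val_zero,
    Matrix.cons_val_one, Matrix.head_cons, Matrix.empty_val', Matrix.cons_val_fin_one,
    Matrix.head_fin_const, Matrix.cons_val_succ, Matrix.of_apply]
  push_cast
  ring
end

section
/- Let n1, n2, n3 ≥ 1 be natural numbers. For each m, define the 5×5 matrix M(m) over ℤ[x] with rows 1,2,3 equal to (0, x^{m+1}, 0, x^m, 0) and rows 4,5 equal to (x^{m+1}, (m-1)x^{m+2}, x^{m+2}, (m-1)x^{m+1}, x^{m+1}). Then trace((M(n1)·M(n2)·M(n3))^2) = 2x^{2(n1+n2+n3)+3} + (n1+n2+n3+3)^2 x^{2(n1+n2+n3)+4} + 2(n1+1)(n2+1)(n3+1)(n1+n2+n3+3) x^{2(n1+n2+n3)+5} + (n1+1)^2(n2+1)^2(n3+1)^2 x^{2(n1+n2+n3)+6}. -/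
open Polynomial Matrix

theorem hexagon_transfer_trace_general (n1 n2 n3 : ℕ) (h1 : 1 ≤ n1) (h2 : 1 ≤ n2) (h3 : 1 ≤ n3)
    (M : ℕ → Matrix (Fin 5) (Fin 5) (Polynomial ℤ))
    (hM : ∀ m, M m = !![0, X ^ (m + 1), 0, X ^ m, 0;
                 0, X ^ (m + 1), 0, X ^ m, 0;
                 0, X ^ (m + 1), 0, X ^ m, 0;
                 X ^ (m + 1), ((m - 1 : ℕ) : Polynomial ℤ) * X ^ (m + 2), X ^ (m + 2),
                   ((m - 1 : ℕ) : Polynomial ℤ) * X ^ (m + 1), X ^ (m + 1);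
                 X ^ (m + 1), ((m - 1 : ℕ) : Polynomial ℤ) * X ^ (m + 2), X ^ (m + 2),
                   ((m - 1 : ℕ) : Polynomial ℤ) * X ^ (m + 1), X ^ (m + 1)]) :
    Matrix.trace ((M n1 * M n2 * M n3) ^ 2) =
      2 * X ^ (2 * (n1 + n2 + n3) + 3)
        + (((n1 + n2 + n3 + 3) ^ 2 : ℕ) : Polynomial ℤ) * X ^ (2 * (n1 + n2 + n3) + 4)
        + ((2 * (n1 + 1) * (n2 + 1) * (n3 + 1) * (n1 + n2 + n3 + 3) : ℕ) : Polynomial ℤ)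
            * X ^ (2 * (n1 + n2 + n3) + 5)
        + (((n1 + 1) ^ 2 * (n2 + 1) ^ 2 * (n3 + 1) ^ 2 : ℕ) : Polynomial ℤ)
            * X ^ (2 * (n1 + n2 + n3) + 6) := by
  set U : Matrix (Fin 5) (Fin 2) (Polynomial ℤ) := !![1, 0; 1, 0; 1, 0; 0, 1; 0, 1] with hU
  set R : ℕ → Matrix (Fin 2) (Fin 5) (Polynomial ℤ) := fun m =>
    !![0, X ^ (m + 1), 0, X ^ m, 0;
       X ^ (m + 1), ((m - 1 : ℕ) : Polynomial ℤ) * X ^ (m + 2), X ^ (m + 2),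
         ((m - 1 : ℕ) : Polynomial ℤ) * X ^ (m + 1), X ^ (m + 1)] with hR
  have hfac : ∀ m, M m = U * R m := by
    intro m
    rw [hM]
    refine Matrix.ext fun i j => ?_
    fin_cases i <;> fin_cases j <;>
      simp [Matrix.mul_apply, Fin.sum_univ_two, hU, hR, Matrix.vecHead, Matrix.vecTail]
  have key : Matrix.trace ((M n1 * M n2 * M n3) ^ 2) =
      Matrix.trace ((R n1 * U * (R n2 * U) * (R n3 * U)) ^ 2) := by
    simp only [hfac, pow_two, Matrix.mul_assoc]
    rw [Matrix.trace_mul_comm]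
    simp only [Matrix.mul_assoc]
  rw [key]
  have hT : ∀ m, 1 ≤ m → R m * U =
      !![X ^ (m + 1), X ^ m;
         X ^ (m + 1) + ((m : Polynomial ℤ) - 1) * X ^ (m + 2) + X ^ (m + 2),
           ((m : Polynomial ℤ) - 1) * X ^ (m + 1) + X ^ (m + 1)] := by
    intro m hm
    have e : ((m - 1 : ℕ) : Polynomial ℤ) = (m : Polynomial ℤ) - 1 := by push_cast [hm]; ring
    refine Matrix.ext fun i j => ?_
    fin_cases i <;> fin_cases j <;>
      simp [Matrix.mul_apply, Fin.sum_univ_five, hU, hR, e, Matrix.vecHead, Matrix.vecTail]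
  rw [hT n1 h1, hT n2 h2, hT n3 h3]
  rw [pow_two, Matrix.mul_fin_two, Matrix.mul_fin_two, Matrix.mul_fin_two,
    Matrix.trace_fin_two_of]
  push_cast
  ring
end

section
/- Let n1, n2 ≥ 1. Define the 8×5 matrix R(n1) over ℤ[x] whose rows 1,2,3 are ((n1-1)x^{n1+1}, x^{n1+1}, x^{n1+1}, (n1-1)x^{n1+2}, x^{n1+2}) and rows 4..8 are (x^{n1}, 0, 0, x^{n1+1}, 0); and the 5×8 matrix T(n2) whose rows 1,2 are ((n2-1)x^{n2+2}, x^{n2+1}, x^{n2+2}, (n2-1)x^{n2+2}, x^{n2+2}, x^{n2+2}, (n2-1)x^{n2+3}, x^{n2+3}) and rows 3,4,5 are (x^{n2+1}, 0, 0, x^{n2+1}, 0, 0, x^{n2+2}, 0). Then trace((R(n1)·T(n2))^2) = 2x^{2n1+2n2+3} + (n1+n2+3)^2 x^{2n1+2n2+4} + 2(n1+1)(n2+1)(n1+n2+3) x^{2n1+2n2+5} + (n1+1)^2(n2+1)^2 x^{2n1+2n2+6}. -/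
open Polynomial Matrix

private lemma consE_2_1 {α : Type*} (x : α) (u : Fin 1 → α) :
    vecCons x u (1 : Fin 2) = u 0 := rfl
private lemma consE_3_1 {α : Type*} (x : α) (u : Fin 2 → α) :
    vecCons x u (1 : Fin 3) = u 0 := rfl
private lemma consE_3_2 {α : Type*} (x : α) (u : Fin 2 → α) :
    vecCons x u (2 : Fin 3) = u 1 := rfl
private lemma consE_4_1 {α : Type*} (x : α) (u : Fin 3 → α) :
    vecCons x u (1 : Fin 4) = u 0 := rfl
private lemma consE_4_2 {α : Type*} (x : α) (u : Fin 3 → α) :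
    vecCons x u (2 : Fin 4) = u 1 := rfl
private lemma consE_4_3 {α : Type*} (x : α) (u : Fin 3 → α) :
    vecCons x u (3 : Fin 4) = u 2 := rfl
private lemma consE_5_1 {α : Type*} (x : α) (u : Fin 4 → α) :
    vecCons x u (1 : Fin 5) = u 0 := rfl
private lemma consE_5_2 {α : Type*} (x : α) (u : Fin 4 → α) :
    vecCons x u (2 : Fin 5) = u 1 := rfl
private lemma consE_5_3 {α : Type*} (x : α) (u : Fin 4 → α) :
    vecCons x u (3 : Fin 5) = u 2 := rfl
private lemma consE_5_4 {α : Type*} (x : α) (u : Fin 4 → α) :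
    vecCons x u (4 : Fin 5) = u 3 := rfl
private lemma consE_6_1 {α : Type*} (x : α) (u : Fin 5 → α) :
    vecCons x u (1 : Fin 6) = u 0 := rfl
private lemma consE_6_2 {α : Type*} (x : α) (u : Fin 5 → α) :
    vecCons x u (2 : Fin 6) = u 1 := rfl
private lemma consE_6_3 {α : Type*} (x : α) (u : Fin 5 → α) :
    vecCons x u (3 : Fin 6) = u 2 := rfl
private lemma consE_6_4 {α : Type*} (x : α) (u : Fin 5 → α) :
    vecCons x u (4 : Fin 6) = u 3 := rfl
private lemma consE_6_5 {α : Type*} (x : α) (u : Fin 5 → α) :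
    vecCons x u (5 : Fin 6) = u 4 := rfl
private lemma consE_7_1 {α : Type*} (x : α) (u : Fin 6 → α) :
    vecCons x u (1 : Fin 7) = u 0 := rfl
private lemma consE_7_2 {α : Type*} (x : α) (u : Fin 6 → α) :
    vecCons x u (2 : Fin 7) = u 1 := rfl
private lemma consE_7_3 {α : Type*} (x : α) (u : Fin 6 → α) :
    vecCons x u (3 : Fin 7) = u 2 := rfl
private lemma consE_7_4 {α : Type*} (x : α) (u : Fin 6 → α) :
    vecCons x u (4 : Fin 7) = u 3 := rfl
private lemma consE_7_5 {α : Type*} (x : α) (u : Fin 6 → α) :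
    vecCons x u (5 : Fin 7) = u 4 := rfl
private lemma consE_7_6 {α : Type*} (x : α) (u : Fin 6 → α) :
    vecCons x u (6 : Fin 7) = u 5 := rfl
private lemma consE_8_1 {α : Type*} (x : α) (u : Fin 7 → α) :
    vecCons x u (1 : Fin 8) = u 0 := rfl
private lemma consE_8_2 {α : Type*} (x : α) (u : Fin 7 → α) :
    vecCons x u (2 : Fin 8) = u 1 := rfl
private lemma consE_8_3 {α : Type*} (x : α) (u : Fin 7 → α) :
    vecCons x u (3 : Fin 8) = u 2 := rfl
private lemma consE_8_4 {α : Type*} (x : α) (u : Fin 7 → α) :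
    vecCons x u (4 : Fin 8) = u 3 := rfl
private lemma consE_8_5 {α : Type*} (x : α) (u : Fin 7 → α) :
    vecCons x u (5 : Fin 8) = u 4 := rfl
private lemma consE_8_6 {α : Type*} (x : α) (u : Fin 7 → α) :
    vecCons x u (6 : Fin 8) = u 5 := rfl
private lemma consE_8_7 {α : Type*} (x : α) (u : Fin 7 → α) :
    vecCons x u (7 : Fin 8) = u 6 := rfl

private lemma vec8_four {α : Type*} (a0 a1 a2 a3 a4 a5 a6 a7 : α) :
    ![a0,a1,a2,a3,a4,a5,a6,a7] 4 = a4 := rfl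
private lemma vec8_five {α : Type*} (a0 a1 a2 a3 a4 a5 a6 a7 : α) :
    ![a0,a1,a2,a3,a4,a5,a6,a7] 5 = a5 := rfl
private lemma vec8_six {α : Type*} (a0 a1 a2 a3 a4 a5 a6 a7 : α) :
    ![a0,a1,a2,a3,a4,a5,a6,a7] 6 = a6 := rfl
private lemma vec8_seven {α : Type*} (a0 a1 a2 a3 a4 a5 a6 a7 : α) :
    ![a0,a1,a2,a3,a4,a5,a6,a7] 7 = a7 := rfl

private lemma trace_sq_cycle {m n : Type*} [Fintype m] [Fintype n]
    (P : Matrix m n (Polynomial ℤ)) (B : Matrix n m (Polynomial ℤ)) :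
    Matrix.trace ((P * B) * (P * B)) = Matrix.trace ((B * P) * (B * P)) := by
  rw [Matrix.mul_assoc, Matrix.trace_mul_comm]
  simp only [Matrix.mul_assoc]

set_option maxHeartbeats 1000000 in

theorem diamond_transfer_trace_general (n1 n2 : ℕ) (h1 : 1 ≤ n1) (h2 : 1 ≤ n2)
    (R : Matrix (Fin 8) (Fin 5) (Polynomial ℤ))
    (T : Matrix (Fin 5) (Fin 8) (Polynomial ℤ))
    (hR : R = !![((n1 - 1 : ℕ) : Polynomial ℤ) * X ^ (n1 + 1), X ^ (n1 + 1), X ^ (n1 + 1),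
                   ((n1 - 1 : ℕ) : Polynomial ℤ) * X ^ (n1 + 2), X ^ (n1 + 2);
                 ((n1 - 1 : ℕ) : Polynomial ℤ) * X ^ (n1 + 1), X ^ (n1 + 1), X ^ (n1 + 1),
                   ((n1 - 1 : ℕ) : Polynomial ℤ) * X ^ (n1 + 2), X ^ (n1 + 2);
                 ((n1 - 1 : ℕ) : Polynomial ℤ) * X ^ (n1 + 1), X ^ (n1 + 1), X ^ (n1 + 1),
                   ((n1 - 1 : ℕ) : Polynomial ℤ) * X ^ (n1 + 2), X ^ (n1 + 2);
                 X ^ n1, 0, 0, X ^ (n1 + 1), 0;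
                 X ^ n1, 0, 0, X ^ (n1 + 1), 0;
                 X ^ n1, 0, 0, X ^ (n1 + 1), 0;
                 X ^ n1, 0, 0, X ^ (n1 + 1), 0;
                 X ^ n1, 0, 0, X ^ (n1 + 1), 0])
    (hT : T = !![((n2 - 1 : ℕ) : Polynomial ℤ) * X ^ (n2 + 2), X ^ (n2 + 1), X ^ (n2 + 2),
                   ((n2 - 1 : ℕ) : Polynomial ℤ) * X ^ (n2 + 2), X ^ (n2 + 2), X ^ (n2 + 2),
                   ((n2 - 1 : ℕ) : Polynomial ℤ) * X ^ (n2 + 3), X ^ (n2 + 3);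
                 ((n2 - 1 : ℕ) : Polynomial ℤ) * X ^ (n2 + 2), X ^ (n2 + 1), X ^ (n2 + 2),
                   ((n2 - 1 : ℕ) : Polynomial ℤ) * X ^ (n2 + 2), X ^ (n2 + 2), X ^ (n2 + 2),
                   ((n2 - 1 : ℕ) : Polynomial ℤ) * X ^ (n2 + 3), X ^ (n2 + 3);
                 X ^ (n2 + 1), 0, 0, X ^ (n2 + 1), 0, 0, X ^ (n2 + 2), 0;
                 X ^ (n2 + 1), 0, 0, X ^ (n2 + 1), 0, 0, X ^ (n2 + 2), 0;
                 X ^ (n2 + 1), 0, 0, X ^ (n2 + 1), 0, 0, X ^ (n2 + 2), 0]) :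
    Matrix.trace ((R * T) ^ 2) =
      2 * X ^ (2 * n1 + 2 * n2 + 3)
        + (((n1 + n2 + 3) ^ 2 : ℕ) : Polynomial ℤ) * X ^ (2 * n1 + 2 * n2 + 4)
        + ((2 * (n1 + 1) * (n2 + 1) * (n1 + n2 + 3) : ℕ) : Polynomial ℤ) * X ^ (2 * n1 + 2 * n2 + 5)
        + (((n1 + 1) ^ 2 * (n2 + 1) ^ 2 : ℕ) : Polynomial ℤ) * X ^ (2 * n1 + 2 * n2 + 6) := by
  have hP : R = (!![1,0;1,0;1,0;0,1;0,1;0,1;0,1;0,1] : Matrix (Fin 8) (Fin 2) (Polynomial ℤ)) *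
      !![((n1 - 1 : ℕ) : Polynomial ℤ) * X ^ (n1 + 1), X ^ (n1 + 1), X ^ (n1 + 1),
           ((n1 - 1 : ℕ) : Polynomial ℤ) * X ^ (n1 + 2), X ^ (n1 + 2);
         X ^ n1, 0, 0, X ^ (n1 + 1), 0] := by
    subst hR
    apply Matrix.ext
    simp [Fin.forall_fin_succ, Matrix.cons_val_succ, Matrix.cons_val_zero,
      Matrix.mul_apply, Fin.sum_univ_two]
  have hQ : T = (!![1,0;1,0;0,1;0,1;0,1] : Matrix (Fin 5) (Fin 2) (Polynomial ℤ)) *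
      !![((n2 - 1 : ℕ) : Polynomial ℤ) * X ^ (n2 + 2), X ^ (n2 + 1), X ^ (n2 + 2),
           ((n2 - 1 : ℕ) : Polynomial ℤ) * X ^ (n2 + 2), X ^ (n2 + 2), X ^ (n2 + 2),
           ((n2 - 1 : ℕ) : Polynomial ℤ) * X ^ (n2 + 3), X ^ (n2 + 3);
         X ^ (n2 + 1), 0, 0, X ^ (n2 + 1), 0, 0, X ^ (n2 + 2), 0] := by
    subst hT
    apply Matrix.ext
    simp [Fin.forall_fin_succ, Matrix.cons_val_succ, Matrix.cons_val_zero,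
      Matrix.mul_apply, Fin.sum_univ_two]
  rw [hP, hQ, sq]
  rw [show ∀ (Pm : Matrix (Fin 8) (Fin 2) (Polynomial ℤ)) (F : Matrix (Fin 2) (Fin 5) (Polynomial ℤ))
        (Qm : Matrix (Fin 5) (Fin 2) (Polynomial ℤ)) (G : Matrix (Fin 2) (Fin 8) (Polynomial ℤ)),
        (Pm * F) * (Qm * G) = Pm * (F * (Qm * G)) from fun _ _ _ _ => by
      simp only [Matrix.mul_assoc]]
  rw [trace_sq_cycle]
  rw [show ∀ (Pm : Matrix (Fin 8) (Fin 2) (Polynomial ℤ)) (F : Matrix (Fin 2) (Fin 5) (Polynomial ℤ))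
        (Qm : Matrix (Fin 5) (Fin 2) (Polynomial ℤ)) (G : Matrix (Fin 2) (Fin 8) (Polynomial ℤ)),
        (F * (Qm * G)) * Pm = (F * Qm) * (G * Pm) from fun _ _ _ _ => by
      simp only [Matrix.mul_assoc]]
  have hC : (!![((n1 - 1 : ℕ) : Polynomial ℤ) * X ^ (n1 + 1), X ^ (n1 + 1), X ^ (n1 + 1),
           ((n1 - 1 : ℕ) : Polynomial ℤ) * X ^ (n1 + 2), X ^ (n1 + 2);
         X ^ n1, 0, 0, X ^ (n1 + 1), 0] : Matrix (Fin 2) (Fin 5) (Polynomial ℤ)) *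
      (!![1,0;1,0;0,1;0,1;0,1] : Matrix (Fin 5) (Fin 2) (Polynomial ℤ)) =
      !![((n1 - 1 : ℕ) : Polynomial ℤ) * X ^ (n1 + 1) + X ^ (n1 + 1),
         X ^ (n1 + 1) + ((n1 - 1 : ℕ) : Polynomial ℤ) * X ^ (n1 + 2) + X ^ (n1 + 2);
         X ^ n1, X ^ (n1 + 1)] := by
    refine Matrix.ext fun i j => ?_
    fin_cases i <;> fin_cases j <;>
      · simp [Matrix.mul_apply, Fin.sum_univ_five, Matrix.vecHead, Matrix.vecTail, consE_2_1, consE_3_1, consE_3_2, consE_4_1, consE_4_2, consE_4_3, consE_5_1, consE_5_2, consE_5_3, consE_5_4, consE_6_1, consE_6_2, consE_6_3, consE_6_4, consE_6_5, consE_7_1, consE_7_2, consE_7_3, consE_7_4, consE_7_5, consE_7_6, consE_8_1, consE_8_2, consE_8_3, consE_8_4, consE_8_5, consE_8_6, consE_8_7]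
        try ring
  have hD : (!![((n2 - 1 : ℕ) : Polynomial ℤ) * X ^ (n2 + 2), X ^ (n2 + 1), X ^ (n2 + 2),
           ((n2 - 1 : ℕ) : Polynomial ℤ) * X ^ (n2 + 2), X ^ (n2 + 2), X ^ (n2 + 2),
           ((n2 - 1 : ℕ) : Polynomial ℤ) * X ^ (n2 + 3), X ^ (n2 + 3);
         X ^ (n2 + 1), 0, 0, X ^ (n2 + 1), 0, 0, X ^ (n2 + 2), 0] : Matrix (Fin 2) (Fin 8) (Polynomial ℤ)) *
      (!![1,0;1,0;1,0;0,1;0,1;0,1;0,1;0,1] : Matrix (Fin 8) (Fin 2) (Polynomial ℤ)) =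
      !![((n2 - 1 : ℕ) : Polynomial ℤ) * X ^ (n2 + 2) + X ^ (n2 + 1) + X ^ (n2 + 2),
         ((n2 - 1 : ℕ) : Polynomial ℤ) * X ^ (n2 + 2) + X ^ (n2 + 2) + X ^ (n2 + 2)
           + ((n2 - 1 : ℕ) : Polynomial ℤ) * X ^ (n2 + 3) + X ^ (n2 + 3);
         X ^ (n2 + 1), X ^ (n2 + 1) + X ^ (n2 + 2)] := by
    refine Matrix.ext fun i j => ?_
    fin_cases i <;> fin_cases j <;>
      · simp [Matrix.mul_apply, Fin.sum_univ_eight, Matrix.vecHead, Matrix.vecTail, consE_2_1, consE_3_1, consE_3_2, consE_4_1, consE_4_2, consE_4_3, consE_5_1, consE_5_2, consE_5_3, consE_5_4, consE_6_1, consE_6_2, consE_6_3, consE_6_4, consE_6_5, consE_7_1, consE_7_2, consE_7_3, consE_7_4, consE_7_5, consE_7_6, consE_8_1, consE_8_2, consE_8_3, consE_8_4, consE_8_5, consE_8_6, consE_8_7]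
        try ring
  rw [hC, hD]
  simp only [Nat.cast_sub h1, Nat.cast_sub h2]
  push_cast
  simp [Matrix.trace_fin_two, Matrix.mul_apply, Fin.sum_univ_two, Matrix.vecHead, Matrix.vecTail,
    two_mul, pow_add, pow_one]
  generalize (X : Polynomial ℤ) ^ n1 = u
  generalize (X : Polynomial ℤ) ^ n2 = v
  generalize ((n1 : Polynomial ℤ)) = a
  generalize ((n2 : Polynomial ℤ)) = b
  ring
end

section
/- Let n ≥ 1 and let M be the 5×5 matrix over ℤ[x] defined with rows 1,2,3 equal to (0, x^{n+1}, 0, x^n, 0) and rows 4,5 equal to (x^{n+1}, (n-1)x^{n+2}, x^{n+2}, (n-1)x^{n+1}, x^{n+1}). Then the polynomial trace(M^6) has degree exactly 6n+6, with leading coefficient (n+1)^6. -/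
open Polynomial Matrix

private lemma trace_pow_mul_comm {R : Type*} [CommRing R] {k l : ℕ}
    (A : Matrix (Fin k) (Fin l) R) (B : Matrix (Fin l) (Fin k) R) (m : ℕ) :
    Matrix.trace ((A * B) ^ (m + 1)) = Matrix.trace ((B * A) ^ (m + 1)) := by
  have h : ∀ j : ℕ, (A * B) ^ j * A = A * (B * A) ^ j := by
    intro j
    induction j with
    | zero => simp
    | succ j ih =>
      rw [pow_succ, pow_succ]
      simp only [Matrix.mul_assoc]
      rw [← Matrix.mul_assoc, ih, Matrix.mul_assoc]
  calc Matrix.trace ((A * B) ^ (m + 1))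
      = Matrix.trace ((A * B) ^ m * A * B) := by rw [pow_succ, Matrix.mul_assoc]
    _ = Matrix.trace (B * ((A * B) ^ m * A)) := (Matrix.trace_mul_comm _ _)
    _ = Matrix.trace ((B * A) ^ (m + 1)) := by
        rw [h m, ← Matrix.mul_assoc, ← pow_succ']

set_option maxHeartbeats 1000000 in
theorem hexagon_transfer_degree (n : ℕ) (hn : 1 ≤ n)
    (M : Matrix (Fin 5) (Fin 5) (Polynomial ℤ))
    (hM : M = !![0, X ^ (n + 1), 0, X ^ n, 0;
                 0, X ^ (n + 1), 0, X ^ n, 0;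
                 0, X ^ (n + 1), 0, X ^ n, 0;
                 X ^ (n + 1), ((n - 1 : ℕ) : Polynomial ℤ) * X ^ (n + 2), X ^ (n + 2),
                   ((n - 1 : ℕ) : Polynomial ℤ) * X ^ (n + 1), X ^ (n + 1);
                 X ^ (n + 1), ((n - 1 : ℕ) : Polynomial ℤ) * X ^ (n + 2), X ^ (n + 2),
                   ((n - 1 : ℕ) : Polynomial ℤ) * X ^ (n + 1), X ^ (n + 1)]) :
    (Matrix.trace (M ^ 6)).natDegree = 6 * n + 6 ∧
    (Matrix.trace (M ^ 6)).leadingCoeff = (((n + 1) ^ 6 : ℕ) : ℤ) := by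
  obtain ⟨k, rfl⟩ : ∃ k, n = k + 1 := ⟨n - 1, (Nat.succ_pred_eq_of_pos hn).symm⟩
  set A : Matrix (Fin 5) (Fin 2) (Polynomial ℤ) :=
    !![1,0;1,0;1,0;0,1;0,1] with hA
  set B : Matrix (Fin 2) (Fin 5) (Polynomial ℤ) :=
    !![0, X ^ (k + 2), 0, X ^ (k + 1), 0;
       X ^ (k + 2), ((k : ℕ) : Polynomial ℤ) * X ^ (k + 3), X ^ (k + 3),
         ((k : ℕ) : Polynomial ℤ) * X ^ (k + 2), X ^ (k + 2)] with hB
  have hMAB : M = A * B := by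
    subst hM
    refine Matrix.ext fun i j => ?_
    fin_cases i <;> fin_cases j <;>
      simp [hA, hB, Matrix.mul_apply, Fin.sum_univ_two, Nat.add_sub_cancel,
        Matrix.vecHead, Matrix.vecTail]
  have htr : Matrix.trace (M ^ 6) = Matrix.trace ((B * A) ^ 6) := by
    rw [hMAB]
    exact trace_pow_mul_comm A B 5
  set Q : Matrix (Fin 2) (Fin 2) (Polynomial ℤ) :=
    !![X, 1; X + ((k : Polynomial ℤ) + 1) * X ^ 2, ((k : Polynomial ℤ) + 1) * X] with hQ
  have hBA : B * A = (X ^ (k + 1) : Polynomial ℤ) • Q := by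
    refine Matrix.ext fun i j => ?_
    fin_cases i <;> fin_cases j <;>
      simp [hA, hB, hQ, Matrix.mul_apply, Fin.sum_univ_five, smul_eq_mul,
        Matrix.vecHead, Matrix.vecTail] <;> ring
  set T : Polynomial ℤ := C 2 * X ^ 3 + C (9 * ((k : ℤ) + 2) ^ 2) * X ^ 4 +
      C (6 * ((k : ℤ) + 2) ^ 4) * X ^ 5 + C (((k : ℤ) + 2) ^ 6) * X ^ 6 with hT
  have hQ3 : Q ^ 3 =
      !![(2 + ((k : Polynomial ℤ) + 1)) * X ^ 2 + ((k : Polynomial ℤ) + 2) ^ 2 * X ^ 3,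
         X + ((k : Polynomial ℤ) + 2) ^ 2 * X ^ 2;
         X ^ 2 + (1 + 3 * ((k : Polynomial ℤ) + 1) + ((k : Polynomial ℤ) + 1) ^ 2) * X ^ 3 +
           ((k : Polynomial ℤ) + 1) * ((k : Polynomial ℤ) + 2) ^ 2 * X ^ 4,
         (1 + 2 * ((k : Polynomial ℤ) + 1)) * X ^ 2 +
           ((k : Polynomial ℤ) + 1) * ((k : Polynomial ℤ) + 2) ^ 2 * X ^ 3] := by
    rw [pow_succ, pow_succ, pow_one]
    refine Matrix.ext fun i j => ?_
    fin_cases i <;> fin_cases j <;>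
      simp [hQ, Matrix.mul_apply, Fin.sum_univ_two, Matrix.vecHead, Matrix.vecTail] <;> ring
  have hQ6 : Matrix.trace (Q ^ 6) = T := by
    have h6 : Q ^ 6 = Q ^ 3 * Q ^ 3 := by rw [← pow_add]
    rw [h6, hQ3, hT, Matrix.mul_fin_two, Matrix.trace_fin_two_of]
    simp only [map_add, _root_.map_mul, map_pow, map_ofNat, Polynomial.C_eq_natCast]
    ring
  have key : Matrix.trace (M ^ 6) = X ^ ((k + 1) * 6) * T := by
    rw [htr, hBA, _root_.smul_pow, Matrix.trace_smul, smul_eq_mul, hQ6, ← pow_mul]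
  have hT6 : T.natDegree = 6 := by
    rw [hT]
    compute_degree!
  have hTlc : T.leadingCoeff = ((k : ℤ) + 2) ^ 6 := by
    rw [Polynomial.leadingCoeff, hT6, hT]
    simp only [coeff_add, coeff_C_mul, coeff_X_pow]
    norm_num
  have hT0 : T ≠ 0 := by
    intro h
    have h2 : ((k : ℤ) + 2) ^ 6 = 0 := by rw [← hTlc, h, Polynomial.leadingCoeff_zero]
    exact (by positivity : ((k : ℤ) + 2) ^ 6 ≠ 0) h2
  constructor
  · rw [key, Polynomial.natDegree_mul (pow_ne_zero _ Polynomial.X_ne_zero) hT0,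
      Polynomial.natDegree_X_pow, hT6]
    ring
  · rw [key, Polynomial.leadingCoeff_mul, Polynomial.leadingCoeff_X_pow, one_mul, hTlc]
    push_cast
    ring
end
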